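/- Let g be a complex nilpotent Lie algebra of dimension n with α(g) = n−2. Then β(g) = n−2, i.e., g possesses an abelian ideal of codimension 2. -/

import Mathlib

open Module

noncomputable def alphaInv (K L : Type*) [Field K] [LieRing L] [LieAlgebra K L] : ℕ :=
  sSup {n | ∃ a : LieSubalgebra K L, IsLieAbelian a ∧ finrank K a = n}

noncomputable def betaInv (K L : Type*) [Field K] [LieRing L] [LieAlgebra K L] : ℕ :=
  sSup {n | ∃ I : LieIdeal K L, IsLieAbelian I ∧ finrank K I = n}

/-!
Let `A` be an abelian subalgebra of maximal dimension `n - 2`. If `A` is not an ideal, then by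
the normalizer condition for nilpotent Lie algebras its normalizer `N` has codimension one, hence
is an ideal, and it is not abelian. A Jacobi identity computation shows that the centre `Z(N)`
has codimension at most one in `A`. Since `L` acts nilpotently on `N / Z(N)`, some `y ∈ N \ Z(N)`
satisfies `⁅L, y⁆ ⊆ Z(N)`, and `Z(N) + K y` is an abelian ideal of dimension at least `dim A`.
-/

open LieAlgebra Submodule

theorem Submodule.finrank_inf_ker_add_finrank_map {K V W : Type*} [Field K] [AddCommGroup V]
    [Module K V] [AddCommGroup W] [Module K W] (p : Submodule K V) [FiniteDimensional K p]
    (f : V →ₗ[K] W) : finrank K ↥(p ⊓ LinearMap.ker f) + finrank K ↥(p.map f) = finrank K p := by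
  rw [← LinearMap.range_domRestrict, ← map_comap_subtype, finrank_map_subtype_eq,
    ← LinearMap.ker_domRestrict, add_comm, LinearMap.finrank_range_add_finrank_ker]

section CommRing

variable {R L : Type*} [CommRing R] [LieRing L] [LieAlgebra R L]

theorem LieSubalgebra.isLieAbelian_iff_lie_eq_zero (H : LieSubalgebra R L) :
    IsLieAbelian H ↔ ∀ a ∈ H, ∀ b ∈ H, ⁅a, b⁆ = 0 :=
  ⟨fun h a ha b hb ↦ congrArg Subtype.val (h.trivial ⟨a, ha⟩ ⟨b, hb⟩),
    fun h ↦ ⟨fun a b ↦ Subtype.ext (h a a.2 b b.2)⟩⟩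

theorem LieSubalgebra.exists_lieIdeal_coe_eq_of_normalizer_eq_top {H : LieSubalgebra R L}
    (h : H.normalizer = ⊤) : ∃ I : LieIdeal R L, ↑I = H :=
  (H.exists_lieIdeal_coe_eq_iff).mpr fun x y hy ↦
    (H.mem_normalizer_iff x).mp (h ▸ LieSubalgebra.mem_top x) y hy

theorem LieIdeal.exists_mem_notMem_forall_lie_mem [LieRing.IsNilpotent L] (I : LieIdeal R L)
    {p : Submodule R L} (h : ¬ (I : Submodule R L) ≤ p) : ∃ y ∈ I, y ∉ p ∧ ∀ x : L, ⁅x, y⁆ ∈ p := by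
  classical
  obtain ⟨k, hk⟩ := LieModule.IsNilpotent.nilpotent R L L
  have hex : ∃ i, ∀ v ∈ LieModule.lowerCentralSeries R L L i, v ∈ I → v ∈ p :=
    ⟨k, fun v hv _ ↦ by simp_all⟩
  obtain ⟨j, hj⟩ : ∃ j, Nat.find hex = j + 1 := by
    refine Nat.exists_eq_add_one.mpr (Nat.pos_of_ne_zero fun h0 ↦ h fun v hv ↦ ?_)
    exact (h0 ▸ Nat.find_spec hex) v (by simp) hv
  obtain ⟨y, hy, hyI, hyp⟩ : ∃ y ∈ LieModule.lowerCentralSeries R L L j, y ∈ I ∧ y ∉ p := by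
    simpa using Nat.find_min hex (m := j) (by omega)
  refine ⟨y, hyI, hyp, fun x ↦ (hj ▸ Nat.find_spec hex) _ ?_ (I.lie_mem hyI)⟩
  rw [LieModule.lowerCentralSeries_succ]
  exact LieSubmodule.lie_mem_lie (LieSubmodule.mem_top x) hy

theorem LieSubalgebra.lt_normalizer_of_ne_top [LieRing.IsNilpotent L] {H : LieSubalgebra R L}
    (h : H ≠ ⊤) : H < H.normalizer := by
  obtain ⟨z, -, hzH, hz⟩ := (⊤ : LieIdeal R L).exists_mem_notMem_forall_lie_mem
    (p := H.toSubmodule) fun hle ↦ h (by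
      rw [← LieSubalgebra.toSubmodule_eq_top, eq_top_iff]; exact hle)
  exact SetLike.lt_iff_le_and_exists.mpr
    ⟨H.le_normalizer, z, (H.mem_normalizer_iff' z).mpr fun y _ ↦ hz y, hzH⟩

end CommRing

section Field

variable {K L : Type*} [Field K] [LieRing L] [LieAlgebra K L]

theorem LieSubalgebra.normalizer_eq_top_of_finrank_le [LieRing.IsNilpotent L]
    [FiniteDimensional K L] {H : LieSubalgebra K L} (h : finrank K L ≤ finrank K H + 1) :
    H.normalizer = ⊤ := by
  rcases eq_or_ne H ⊤ with rfl | hH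
  · exact top_le_iff.mp (⊤ : LieSubalgebra K L).le_normalizer
  have hlt : finrank K H < finrank K H.normalizer :=
    Submodule.finrank_lt_finrank_of_lt (LieSubalgebra.lt_normalizer_of_ne_top hH)
  rw [← LieSubalgebra.toSubmodule_eq_top]
  exact Submodule.eq_top_of_finrank_eq (le_antisymm (Submodule.finrank_le _) (by
    change _ ≤ finrank K H.normalizer; omega))

def LieIdeal.center (N : LieIdeal K L) : LieIdeal K L :=
  N ⊓ LieModule.ker K L N

theorem LieIdeal.mem_center {N : LieIdeal K L} {z : L} :
    z ∈ N.center ↔ z ∈ N ∧ ∀ n ∈ N, ⁅z, n⁆ = 0 := by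
  simp [LieIdeal.center, Subtype.ext_iff]

theorem LieIdeal.lie_eq_zero_of_mem_center {N : LieIdeal K L} {z n : L} (hz : z ∈ N.center)
    (hn : n ∈ N) : ⁅z, n⁆ = 0 :=
  (LieIdeal.mem_center.mp hz).2 n hn

theorem LieIdeal.lie_eq_zero_of_mem_center_sup_span {N : LieIdeal K L} {y u v : L} (hy : y ∈ N)
    (hu : u ∈ (N.center : Submodule K L) ⊔ span K {y})
    (hv : v ∈ (N.center : Submodule K L) ⊔ span K {y}) : ⁅u, v⁆ = 0 := by
  have hyv : ⁅y, v⁆ = 0 := by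
    obtain ⟨z, hz, _, hw, rfl⟩ := mem_sup.mp hv
    obtain ⟨c, rfl⟩ := mem_span_singleton.mp hw
    rw [lie_add, ← lie_skew, N.lie_eq_zero_of_mem_center hz hy, lie_smul, lie_self, neg_zero,
      smul_zero, add_zero]
  have hvN : v ∈ N := sup_le inf_le_left ((span_singleton_le_iff_mem _ _).mpr hy) hv
  obtain ⟨z, hz, _, hw, rfl⟩ := mem_sup.mp hu
  obtain ⟨c, rfl⟩ := mem_span_singleton.mp hw
  rw [add_lie, smul_lie, N.lie_eq_zero_of_mem_center hz hvN, hyv, smul_zero, add_zero]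

theorem LieIdeal.exists_isLieAbelian_finrank_eq_finrank_center_add_one [LieRing.IsNilpotent L]
    [FiniteDimensional K L] {N : LieIdeal K L} (hN : ¬ IsLieAbelian N) :
    ∃ I : LieIdeal K L, IsLieAbelian I ∧ finrank K I = finrank K N.center + 1 := by
  have hNZ : ¬ (N : Submodule K L) ≤ N.center := fun h ↦ hN <|
    (LieIdeal.isLieAbelian_iff K L).mpr
      (((LieSubmodule.toSubmodule_le_toSubmodule _ _).mp h).trans inf_le_right)
  obtain ⟨y, hyN, hyZ, hy⟩ := N.exists_mem_notMem_forall_lie_mem hNZ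
  let I : LieIdeal K L :=
    { toSubmodule := N.center ⊔ span K {y}
      lie_mem := fun {x v} hv ↦ by
        obtain ⟨z, hz, _, hw, rfl⟩ := mem_sup.mp hv
        obtain ⟨c, rfl⟩ := mem_span_singleton.mp hw
        rw [lie_add, lie_smul]
        exact mem_sup_left (add_mem (N.center.lie_mem hz) (smul_mem _ c (hy x))) }
  refine ⟨I, (LieSubmodule.lie_abelian_iff_lie_self_eq_bot I).mpr ?_,
    finrank_sup_span_singleton hyZ⟩
  exact (LieSubmodule.lie_eq_bot_iff I I).mpr fun u hu v hv ↦
    N.lie_eq_zero_of_mem_center_sup_span hyN hu hv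

/-- By Jacobi, `⁅⁅x, a₀⁆, a⁆ = -⁅a₀, ⁅x, a⁆⁆` for `a ∈ A`, and `ad a₀` has rank at most
one on `N = A + K ⁅x, a₀⁆`; so `ad ⁅x, a₀⁆` has rank at most one on `A`, and its kernel there is
central in `N`. -/
theorem LieIdeal.finrank_le_finrank_center_add_one [FiniteDimensional K L] {N : LieIdeal K L}
    {A : Submodule K L} (hA : ∀ a ∈ A, ∀ b ∈ A, ⁅a, b⁆ = 0) (hAN : A ≤ N)
    (hN : finrank K N ≤ finrank K A + 1) {x a₀ : L} (ha₀ : a₀ ∈ A) (hxa₀ : ⁅x, a₀⁆ ∉ A) :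
    finrank K A ≤ finrank K N.center + 1 := by
  set y := ⁅x, a₀⁆
  have hyN : y ∈ N := N.lie_mem (hAN ha₀)
  have hN_eq : A ⊔ span K {y} = N :=
    eq_of_le_of_finrank_le (sup_le hAN ((span_singleton_le_iff_mem _ _).mpr hyN))
      (by rw [finrank_sup_span_singleton hxa₀]; exact hN)
  have hker : A ⊓ LinearMap.ker (ad K L y) ≤ N.center := by
    rintro a ⟨haA, hya : ⁅y, a⁆ = 0⟩
    have hNa : (N : Submodule K L) ≤ LinearMap.ker (ad K L a) := by
      rw [← hN_eq]
      refine sup_le (fun b hb ↦ hA a haA b hb) ((span_singleton_le_iff_mem _ _).mpr ?_)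
      rw [LinearMap.mem_ker, ad_apply, ← lie_skew, hya, neg_zero]
    exact LieIdeal.mem_center.mpr ⟨hAN haA, fun n hn ↦ hNa hn⟩
  have hmap : A.map (ad K L y) ≤ span K {⁅a₀, y⁆} := by
    rintro _ ⟨a, ha, rfl⟩
    have hjacobi : ⁅y, a⁆ = -⁅a₀, ⁅x, a⁆⁆ := by
      have := leibniz_lie x a₀ a
      rw [hA a₀ ha₀ a ha, lie_zero] at this
      exact eq_neg_of_add_eq_zero_left this.symm
    obtain ⟨b, hb, _, hw, hxa⟩ := mem_sup.mp (hN_eq ▸ N.lie_mem (hAN ha) : ⁅x, a⁆ ∈ A ⊔ span K {y})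
    obtain ⟨c, rfl⟩ := mem_span_singleton.mp hw
    rw [ad_apply, hjacobi, ← hxa, lie_add, hA a₀ ha₀ b hb, zero_add, lie_smul]
    exact neg_mem (smul_mem _ c (mem_span_singleton_self _))
  have hrank : finrank K (A.map (ad K L y)) ≤ 1 :=
    (finrank_mono hmap).trans (finrank_span_le_card _ |>.trans (by simp))
  calc finrank K A = finrank K ↥(A ⊓ LinearMap.ker (ad K L y)) + finrank K (A.map (ad K L y)) :=
        (A.finrank_inf_ker_add_finrank_map _).symm
    _ ≤ finrank K N.center + 1 := add_le_add (finrank_mono hker) hrank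

theorem LieSubalgebra.exists_isLieAbelian_lieIdeal_finrank_le [LieRing.IsNilpotent L]
    [FiniteDimensional K L] {A : LieSubalgebra K L} (hA : IsLieAbelian A)
    (hmax : ∀ B : LieSubalgebra K L, IsLieAbelian B → finrank K B ≤ finrank K A)
    (hdim : finrank K L ≤ finrank K A + 2) :
    ∃ I : LieIdeal K L, IsLieAbelian I ∧ finrank K A ≤ finrank K I := by
  by_cases hnorm : A.normalizer = ⊤
  · obtain ⟨I, rfl⟩ := exists_lieIdeal_coe_eq_of_normalizer_eq_top hnorm
    exact ⟨I, hA, le_rfl⟩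
  have hlt : finrank K A < finrank K A.normalizer :=
    Submodule.finrank_lt_finrank_of_lt (lt_normalizer_of_ne_top fun h ↦ hnorm (h ▸ top_le_iff.mp
      (⊤ : LieSubalgebra K L).le_normalizer))
  obtain ⟨N, hN⟩ := exists_lieIdeal_coe_eq_of_normalizer_eq_top
    (normalizer_eq_top_of_finrank_le (H := A.normalizer) (by omega))
  obtain ⟨x, hx⟩ : ∃ x, x ∉ A.normalizer := by
    by_contra! h
    exact hnorm (eq_top_iff.mpr fun x _ ↦ h x)
  obtain ⟨a₀, ha₀, hxa₀⟩ : ∃ a₀ ∈ A, ⁅x, a₀⁆ ∉ A := by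
    simpa [mem_normalizer_iff] using hx
  have hNL : finrank K A.normalizer < finrank K L :=
    Submodule.finrank_lt (by rwa [Ne, LieSubalgebra.toSubmodule_eq_top])
  have hNdim : finrank K (N : LieSubalgebra K L) = finrank K A.normalizer := by rw [hN]
  have hNab : ¬ IsLieAbelian N := fun h ↦ by
    have := hmax N h
    omega
  have hAN : A.toSubmodule ≤ N := fun a ha ↦ by
    change a ∈ (N : LieSubalgebra K L)
    exact hN ▸ A.le_normalizer ha
  have hZ : finrank K A ≤ finrank K N.center + 1 :=
    N.finrank_le_finrank_center_add_one ((isLieAbelian_iff_lie_eq_zero A).mp hA) hAN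
      (by change finrank K (N : LieSubalgebra K L) ≤ finrank K A + 1; omega) ha₀ hxa₀
  obtain ⟨I, hI, hIdim⟩ := N.exists_isLieAbelian_finrank_eq_finrank_center_add_one hNab
  exact ⟨I, hI, by omega⟩

end Field

section Invariants

variable (K L : Type*) [Field K] [LieRing L] [LieAlgebra K L] [FiniteDimensional K L]

theorem bddAbove_finrank_isLieAbelian_lieSubalgebra :
    BddAbove {n | ∃ a : LieSubalgebra K L, IsLieAbelian a ∧ finrank K a = n} :=
  ⟨finrank K L, by rintro _ ⟨A, -, rfl⟩; exact Submodule.finrank_le A.toSubmodule⟩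

theorem exists_isLieAbelian_finrank_eq_alphaInv :
    ∃ A : LieSubalgebra K L, IsLieAbelian A ∧ finrank K A = alphaInv K L :=
  Nat.sSup_mem (s := {n | ∃ a : LieSubalgebra K L, IsLieAbelian a ∧ finrank K a = n})
    ⟨0, ⊥, (LieSubalgebra.isLieAbelian_iff_lie_eq_zero ⊥).mpr (by simp),
      by change finrank K (⊥ : LieSubalgebra K L).toSubmodule = 0
         rw [LieSubalgebra.bot_toSubmodule, finrank_bot]⟩
    (bddAbove_finrank_isLieAbelian_lieSubalgebra K L)

variable {K L}

theorem finrank_le_alphaInv {A : LieSubalgebra K L} (hA : IsLieAbelian A) :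
    finrank K A ≤ alphaInv K L :=
  le_csSup (bddAbove_finrank_isLieAbelian_lieSubalgebra K L) ⟨A, hA, rfl⟩

theorem finrank_le_betaInv {I : LieIdeal K L} (hI : IsLieAbelian I) :
    finrank K I ≤ betaInv K L :=
  le_csSup ⟨finrank K L, by rintro _ ⟨J, -, rfl⟩; exact Submodule.finrank_le J.toSubmodule⟩
    ⟨I, hI, rfl⟩

theorem betaInv_le_alphaInv : betaInv K L ≤ alphaInv K L :=
  csSup_le' fun _ ⟨I, hI, hIdim⟩ ↦ hIdim ▸ finrank_le_alphaInv (A := (I : LieSubalgebra K L)) hI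

end Invariants

/-- A complex nilpotent Lie algebra with α(g) = n-2 satisfies β(g) = n-2. -/
theorem stmt_13 (L : Type*) [LieRing L] [LieAlgebra ℂ L] [FiniteDimensional ℂ L]
    [LieRing.IsNilpotent L] (n : ℕ) (hn : finrank ℂ L = n)
    (halpha : alphaInv ℂ L = n - 2) : betaInv ℂ L = n - 2 := by
  obtain ⟨A, hA, hAdim⟩ := exists_isLieAbelian_finrank_eq_alphaInv ℂ L
  obtain ⟨I, hI, hAI⟩ := A.exists_isLieAbelian_lieIdeal_finrank_le hA
    (fun B hB ↦ hAdim ▸ finrank_le_alphaInv hB) (by omega)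
  refine le_antisymm (halpha ▸ betaInv_le_alphaInv) ?_
  calc n - 2 = finrank ℂ A := by rw [hAdim, halpha]
    _ ≤ finrank ℂ I := hAI
    _ ≤ betaInv ℂ L := finrank_le_betaInv hI
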